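/- arXiv:2303.01604 — 3 statements merged into one kernel-verified Lean document; each statement's English description precedes it below -/
import Mathlib

section
/- Let E be a nonzero finite-dimensional ultrametrically normed vector space over a trivially valued field K, and define the minimal slope μ_min(E) := -log(sup_{x∈E} ‖x‖). Then for any exact sequence 0 → F → E → G → 0 of K-vector spaces, with F given the restricted norm and G the quotient norm, one has μ_min(E) = min(μ_min(F), μ_min(G)). -/
/-!
Over a trivially valued field, vectors with pairwise distinct norms are linearly independent
(the norm of a combination of them is the largest norm among its terms), so the norm takes
finitely many values and all the suprema and infima involved are attained. Take `x` of maximal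
norm and `z` of minimal norm in the coset `x + F`: then `‖x‖ ≤ max ‖z‖ ‖x - z‖`, which bounds
the supremum on `E` by the larger of the suprema on `E ⧸ F` and on `F`. The reverse inequality
is clear, and `-log` turns this maximum into the minimum of the slopes.
-/

/-- A norm for the trivial absolute value on `K`: `|c| = 1` for every `c ≠ 0`. -/
structure IsUltrametricNorm (K : Type*) {E : Type*} [DivisionRing K] [AddCommGroup E]
    [Module K E] (nrm : E → ℝ) : Prop where
  eq_zero_iff : ∀ s, nrm s = 0 ↔ s = 0
  isNonarchimedean : IsNonarchimedean nrm
  smul_eq : ∀ (c : K) (s : E), c ≠ 0 → nrm (c • s) = nrm s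

namespace IsUltrametricNorm

variable {K E : Type*} [DivisionRing K] [AddCommGroup E] [Module K E] {nrm : E → ℝ}
  (hn : IsUltrametricNorm K nrm)
include hn

lemma map_zero : nrm 0 = 0 := (hn.eq_zero_iff 0).2 rfl

lemma map_neg (s : E) : nrm (-s) = nrm s := by
  simpa using hn.smul_eq (-1) s (neg_ne_zero.2 one_ne_zero)

lemma nonneg (s : E) : 0 ≤ nrm s := by
  simpa [hn.map_zero, hn.map_neg] using hn.isNonarchimedean s (-s)

lemma pos_of_ne_zero {s : E} (hs : s ≠ 0) : 0 < nrm s :=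
  (hn.nonneg s).lt_of_ne' (mt (hn.eq_zero_iff s).1 hs)

lemma linearIndependent_of_injective_comp {ι : Type*} {v : ι → E} (hv : ∀ i, v i ≠ 0)
    (hinj : (nrm ∘ v).Injective) : LinearIndependent K v := by
  classical
  refine linearIndependent_iff'.2 fun s g hsum j hj => by_contra fun hgj => ?_
  set u := {i ∈ s | g i • v i ≠ 0}
  have hju : j ∈ u := Finset.mem_filter.2 ⟨hj, smul_ne_zero hgj (hv j)⟩
  obtain ⟨k, hk, hmax⟩ := u.exists_max_image (fun i => nrm (v i)) ⟨j, hju⟩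
  have hg : ∀ i ∈ u, g i ≠ 0 := fun i hi => left_ne_zero_of_smul (Finset.mem_filter.1 hi).2
  have hsum_u : nrm (∑ i ∈ u, g i • v i) = nrm (v k) := by
    rw [hn.isNonarchimedean.apply_sum_eq_of_lt (fun a => (hn.map_neg a).symm) hk,
      hn.smul_eq _ _ (hg k hk)]
    intro i hi hik
    rw [hn.smul_eq _ _ (hg i hi), hn.smul_eq _ _ (hg k hk)]
    exact (hmax i hi).lt_of_ne fun h => hik (hinj h)
  rw [Finset.sum_filter_ne_zero, hsum, hn.map_zero] at hsum_u
  exact (hn.pos_of_ne_zero (hv k)).ne hsum_u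

lemma finite_range [FiniteDimensional K E] : (Set.range nrm).Finite := by
  refine Set.Finite.of_sdiff (t := {0}) ?_ (Set.finite_singleton 0)
  have hval : ∀ r : ↥(Set.range nrm \ {0}), ∃ s, nrm s = r := fun r => r.2.1
  choose v hv using hval
  have hv0 : ∀ r, v r ≠ 0 := fun r h => r.2.2 (by rw [← hv r, h, hn.map_zero]; rfl)
  have hinj : (nrm ∘ v).Injective := fun r r' h => Subtype.ext (by simpa [hv] using h)
  exact Set.finite_coe_iff.1 (hn.linearIndependent_of_injective_comp hv0 hinj).finite

end IsUltrametricNorm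

lemma Set.Finite.sSup_eq_zero_iff {s : Set ℝ} (hs : s.Finite) (hne : s.Nonempty)
    (h0 : ∀ x ∈ s, 0 ≤ x) : sSup s = 0 ↔ ∀ x ∈ s, x = 0 :=
  ⟨fun h x hx => le_antisymm (h ▸ le_csSup hs.bddAbove hx) (h0 x hx),
    fun h => h _ (hne.csSup_mem hs)⟩

lemma coe_neg_log_max_eq_min {a b : ℝ} (ha : 0 ≤ a) (hb : 0 ≤ b) (hab : 0 < max a b) :
    ((-Real.log (max a b) : ℝ) : EReal) =
      min (if a = 0 then ⊤ else ((-Real.log a : ℝ) : EReal))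
        (if b = 0 then ⊤ else ((-Real.log b : ℝ) : EReal)) := by
  rcases ha.eq_or_lt with rfl | ha
  · rw [max_eq_right hb] at hab ⊢
    rw [if_pos rfl, if_neg hab.ne', min_eq_right le_top]
  rcases hb.eq_or_lt with rfl | hb
  · rw [max_eq_left ha.le, if_neg ha.ne', if_pos rfl, min_eq_left le_top]
  rw [if_neg ha.ne', if_neg hb.ne']
  rcases le_total a b with h | h
  · rw [max_eq_right h, min_eq_right (EReal.coe_le_coe_iff.2 (neg_le_neg (Real.log_le_log ha h)))]
  · rw [max_eq_left h, min_eq_left (EReal.coe_le_coe_iff.2 (neg_le_neg (Real.log_le_log hb h)))]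

section Quotient

variable {K E : Type*} [Ring K] [AddCommGroup E] [Module K E]

noncomputable def quotNorm (nrm : E → ℝ) (F : Submodule K E) (q : E ⧸ F) : ℝ :=
  sInf (nrm '' {z | Submodule.Quotient.mk z = q})

variable {nrm : E → ℝ} (F : Submodule K E) (hfin : (Set.range nrm).Finite)
include hfin

lemma exists_quotNorm_eq (q : E ⧸ F) :
    ∃ z, Submodule.Quotient.mk z = q ∧ nrm z = quotNorm nrm F q := by
  obtain ⟨z₀, hz₀⟩ := Submodule.Quotient.mk_surjective F q
  exact Set.Nonempty.csInf_mem (s := nrm '' {z | Submodule.Quotient.mk z = q})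
    ⟨_, z₀, hz₀, rfl⟩ (hfin.subset (Set.image_subset_range _ _))

lemma quotNorm_mk_le (z : E) : quotNorm nrm F (Submodule.Quotient.mk z) ≤ nrm z :=
  csInf_le (hfin.subset (Set.image_subset_range _ _)).bddBelow ⟨z, rfl, rfl⟩

lemma range_quotNorm_subset : Set.range (quotNorm nrm F) ⊆ Set.range nrm := by
  rintro _ ⟨q, rfl⟩
  obtain ⟨z, -, hz⟩ := exists_quotNorm_eq F hfin q
  exact ⟨z, hz⟩

end Quotient

namespace IsUltrametricNorm

variable {K E : Type*} [DivisionRing K] [AddCommGroup E] [Module K E] {nrm : E → ℝ}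
  (hn : IsUltrametricNorm K nrm) (F : Submodule K E) (hfin : (Set.range nrm).Finite)
include hn hfin

lemma sSup_range_pos [Nontrivial E] : 0 < sSup (Set.range nrm) := by
  obtain ⟨x, hx⟩ := exists_ne (0 : E)
  exact (hn.pos_of_ne_zero hx).trans_le (le_csSup hfin.bddAbove ⟨x, rfl⟩)

lemma quotNorm_nonneg (q : E ⧸ F) : 0 ≤ quotNorm nrm F q := by
  obtain ⟨z, -, hz⟩ := exists_quotNorm_eq F hfin q
  exact hz ▸ hn.nonneg z

lemma quotNorm_eq_zero_iff (q : E ⧸ F) : quotNorm nrm F q = 0 ↔ q = 0 := by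
  constructor
  · obtain ⟨z, rfl, hz⟩ := exists_quotNorm_eq F hfin q
    rw [← hz, hn.eq_zero_iff]
    rintro rfl
    rfl
  · rintro rfl
    refine le_antisymm ?_ (hn.quotNorm_nonneg F hfin 0)
    simpa [hn.map_zero] using quotNorm_mk_le F hfin 0

lemma sSup_image_eq_zero_iff : sSup (nrm '' F) = 0 ↔ F = ⊥ := by
  rw [(hfin.subset (Set.image_subset_range _ _)).sSup_eq_zero_iff ⟨_, 0, F.zero_mem, rfl⟩
    (Set.forall_mem_image.2 fun z _ => hn.nonneg z), Set.forall_mem_image, Submodule.eq_bot_iff]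
  simp only [SetLike.mem_coe, hn.eq_zero_iff]

lemma sSup_range_quotNorm_eq_zero_iff : sSup (Set.range (quotNorm nrm F)) = 0 ↔ F = ⊤ := by
  rw [(hfin.subset (range_quotNorm_subset F hfin)).sSup_eq_zero_iff (Set.range_nonempty _)
    (Set.forall_mem_range.2 (hn.quotNorm_nonneg F hfin)), Set.forall_mem_range,
    ← Submodule.Quotient.subsingleton_iff]
  simp only [hn.quotNorm_eq_zero_iff F hfin]
  exact ⟨fun h => subsingleton_of_forall_eq 0 h, fun _ q => Subsingleton.elim q 0⟩

lemma sSup_range_eq_max :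
    sSup (Set.range nrm) = max (sSup (nrm '' F)) (sSup (Set.range (quotNorm nrm F))) := by
  have hF : (nrm '' F).Finite := hfin.subset (Set.image_subset_range _ _)
  have hG : (Set.range (quotNorm nrm F)).Finite := hfin.subset (range_quotNorm_subset F hfin)
  refine le_antisymm ?_ (max_le ?_ ?_)
  · obtain ⟨x, hx⟩ := (Set.range_nonempty nrm).csSup_mem hfin
    obtain ⟨z, hz, hnz⟩ := exists_quotNorm_eq F hfin (Submodule.Quotient.mk x)
    have hxz : x - z ∈ F := (Submodule.Quotient.eq F).1 hz.symm
    calc sSup (Set.range nrm) = nrm ((x - z) + z) := by rw [sub_add_cancel, hx]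
      _ ≤ max (nrm (x - z)) (nrm z) := hn.isNonarchimedean _ _
      _ ≤ _ := max_le_max (le_csSup hF.bddAbove ⟨_, hxz, rfl⟩)
          (hnz ▸ le_csSup hG.bddAbove ⟨_, rfl⟩)
  · exact csSup_le_csSup hfin.bddAbove ⟨_, 0, F.zero_mem, rfl⟩ (Set.image_subset_range _ _)
  · exact csSup_le_csSup hfin.bddAbove (Set.range_nonempty _) (range_quotNorm_subset F hfin)

end IsUltrametricNorm

theorem muMin_eq_min_of_exact_general
    {K E : Type*} [Field K] [AddCommGroup E] [Module K E] [FiniteDimensional K E]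
    [Nontrivial E]
    (nrm : E → ℝ)
    (h_eq_zero : ∀ s : E, nrm s = 0 ↔ s = 0)
    (h_ultra : ∀ s t : E, nrm (s + t) ≤ max (nrm s) (nrm t))
    (h_smul : ∀ (c : K) (s : E), c ≠ 0 → nrm (c • s) = nrm s)
    (F : Submodule K E) :
    ((-Real.log (sSup (Set.range nrm)) : ℝ) : EReal) =
      min
        (if F = ⊥ then (⊤ : EReal)
          else ((-Real.log (sSup (nrm '' (F : Set E))) : ℝ) : EReal))
        (if F = ⊤ then (⊤ : EReal)
          else ((-Real.log (sSup (Set.range (fun q : E ⧸ F =>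
            sInf (nrm '' {z : E | (Submodule.Quotient.mk z : E ⧸ F) = q})))) : ℝ) : EReal)) := by
  have hn : IsUltrametricNorm K nrm := ⟨h_eq_zero, h_ultra, h_smul⟩
  have hfin := hn.finite_range
  have hmax := hn.sSup_range_eq_max F hfin
  have key := coe_neg_log_max_eq_min
    (Real.sSup_nonneg (Set.forall_mem_image.2 fun z _ => hn.nonneg z))
    (Real.sSup_nonneg (Set.forall_mem_range.2 (hn.quotNorm_nonneg F hfin)))
    (hmax ▸ hn.sSup_range_pos hfin)
  simp only [hn.sSup_image_eq_zero_iff F hfin, hn.sSup_range_quotNorm_eq_zero_iff F hfin,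
    ← hmax] at key
  exact key

/-- For a nonzero finite-dimensional ultrametrically normed vector space `E`
over a trivially valued field, with minimal slope `μ_min = -log (sup of the norm)`
(`+∞` for the zero space), and an exact sequence `0 → F → E → E⧸F → 0` with restricted
and quotient norms, one has `μ_min(E) = min (μ_min F) (μ_min (E⧸F))`. -/
theorem muMin_eq_min_of_exact
    {K E : Type*} [Field K] [AddCommGroup E] [Module K E] [FiniteDimensional K E]
    [Nontrivial E]
    (nrm : E → ℝ)
    (h_nonneg : ∀ s : E, 0 ≤ nrm s)
    (h_eq_zero : ∀ s : E, nrm s = 0 ↔ s = 0)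
    (h_ultra : ∀ s t : E, nrm (s + t) ≤ max (nrm s) (nrm t))
    (h_smul : ∀ (c : K) (s : E), c ≠ 0 → nrm (c • s) = nrm s)
    (F : Submodule K E) :
    ((-Real.log (sSup (Set.range nrm)) : ℝ) : EReal) =
      min
        (if F = ⊥ then (⊤ : EReal)
          else ((-Real.log (sSup (nrm '' (F : Set E))) : ℝ) : EReal))
        (if F = ⊤ then (⊤ : EReal)
          else ((-Real.log (sSup (Set.range (fun q : E ⧸ F =>
            sInf (nrm '' {z : E | (Submodule.Quotient.mk z : E ⧸ F) = q})))) : ℝ) : EReal)) :=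
  muMin_eq_min_of_exact_general nrm h_eq_zero h_ultra h_smul F
end

section
/- The construction sending an R-filtration F on a finite-dimensional K-vector space E to the ultrametric norm ‖s‖_F = exp(-sup{t : s ∈ F^t E}) is a bijection between separated, exhaustive, left-continuous R-filtrations of E by subspaces and ultrametric norms on E over the trivially valued field K. -/
open Classical

/-- A separated, exhaustive, left-continuous decreasing ℝ-filtration of `E` by
`K`-subspaces. -/
structure TrivFiltration (K E : Type*) [Field K] [AddCommGroup E] [Module K E] where
  F : ℝ → Submodule K E
  mono : ∀ {t t' : ℝ}, t' ≤ t → F t ≤ F t'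
  exhaustive : ∃ t₀ : ℝ, ∀ t ≤ t₀, F t = ⊤
  separated : ∃ t₁ : ℝ, ∀ t, t₁ ≤ t → F t = ⊥
  leftCont : ∀ t : ℝ, F t = ⨅ t' < t, F t'

/-- An ultrametric norm on `E` over the trivially valued field `K`. -/
structure TrivNorm (K E : Type*) [Field K] [AddCommGroup E] [Module K E] where
  nrm : E → ℝ
  nonneg : ∀ s : E, 0 ≤ nrm s
  eq_zero : ∀ s : E, nrm s = 0 ↔ s = 0
  ultra : ∀ s t : E, nrm (s + t) ≤ max (nrm s) (nrm t)
  smul_eq : ∀ (c : K) (s : E), c ≠ 0 → nrm (c • s) = nrm s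

/-!
A filtration is recovered from its norm because left continuity makes `sup {t | s ∈ F^t E}` a
maximum, so `‖s‖_F ≤ exp (-t) ↔ s ∈ F^t E`. Conversely, the sublevel sets of an ultrametric norm
over a trivially valued field are subspaces, and the weight of `s ≠ 0` in that filtration is
`-log ‖s‖`. The only input from finite dimension is that the filtration of a norm is exhaustive
and separated: an antitone family of subspaces of a Noetherian (resp. Artinian) module that
covers it (resp. has trivial intersection) is eventually `⊤` (resp. eventually `⊥`).
-/

section AntitoneSubmodules

variable {R M ι : Type*} [Ring R] [AddCommGroup M] [Module R M] [LinearOrder ι] [Nonempty ι]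

theorem Submodule.exists_forall_le_eq_top_of_antitone [IsNoetherian R M] {f : ι → Submodule R M}
    (hf : Antitone f) (hcover : ∀ x, ∃ i, x ∈ f i) : ∃ i₀, ∀ i ≤ i₀, f i = ⊤ := by
  obtain ⟨_, ⟨i₀, rfl⟩, hmax⟩ :=
    set_has_maximal_iff_noetherian.mpr ‹_› (Set.range f) (Set.range_nonempty f)
  have htop : f i₀ = ⊤ := by
    refine eq_top_iff.mpr fun x _ => ?_
    obtain ⟨i, hi⟩ := hcover x
    have hle : f i₀ ≤ f (min i i₀) := hf (min_le_right i i₀)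
    rw [hle.eq_of_not_lt (hmax _ ⟨_, rfl⟩)]
    exact hf (min_le_left i i₀) hi
  exact ⟨i₀, fun i hi => top_unique (htop ▸ hf hi)⟩

theorem Submodule.exists_forall_ge_eq_bot_of_antitone [IsArtinian R M] {f : ι → Submodule R M}
    (hf : Antitone f) (hsep : ∀ x ≠ 0, ∃ i, x ∉ f i) : ∃ i₁, ∀ i, i₁ ≤ i → f i = ⊥ := by
  obtain ⟨_, ⟨i₁, rfl⟩, hmin⟩ := IsArtinian.set_has_minimal (Set.range f) (Set.range_nonempty f)
  have hbot : f i₁ = ⊥ := by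
    refine eq_bot_iff.mpr fun x hx => (Submodule.mem_bot R).mpr ?_
    by_contra hx0
    obtain ⟨i, hi⟩ := hsep x hx0
    have hle : f (max i i₁) ≤ f i₁ := hf (le_max_right i i₁)
    rw [← hle.eq_of_not_lt (hmin _ ⟨_, rfl⟩)] at hx
    exact hi (hf (le_max_left i i₁) hx)
  exact ⟨i₁, fun i hi => bot_unique (hbot ▸ hf hi)⟩

end AntitoneSubmodules

section

variable {K E : Type*} [Field K] [AddCommGroup E] [Module K E]

namespace TrivFiltration

variable (Fil : TrivFiltration K E)

noncomputable def weight (s : E) : ℝ := sSup {t | s ∈ Fil.F t}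

theorem mem_F_weight (s : E) : s ∈ Fil.F (Fil.weight s) := by
  obtain ⟨t₀, ht₀⟩ := Fil.exhaustive
  have hne : {t | s ∈ Fil.F t}.Nonempty := ⟨t₀, by simp [ht₀ t₀ le_rfl]⟩
  rw [Fil.leftCont]
  simp only [Submodule.mem_iInf]
  intro t' ht'
  obtain ⟨t, ht, ht't⟩ := exists_lt_of_lt_csSup hne ht'
  exact Fil.mono ht't.le ht

theorem bddAbove_setOf_mem_F {s : E} (hs : s ≠ 0) : BddAbove {t | s ∈ Fil.F t} := by
  obtain ⟨t₁, ht₁⟩ := Fil.separated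
  refine ⟨t₁, fun t ht => le_of_not_gt fun hlt => hs ?_⟩
  simpa [ht₁ t hlt.le] using ht

theorem mem_F_iff_le_weight {s : E} (hs : s ≠ 0) {t : ℝ} : s ∈ Fil.F t ↔ t ≤ Fil.weight s :=
  ⟨fun h => le_csSup (Fil.bddAbove_setOf_mem_F hs) h, fun h => Fil.mono h (Fil.mem_F_weight s)⟩

theorem weight_smul {c : K} (hc : c ≠ 0) (s : E) : Fil.weight (c • s) = Fil.weight s := by
  simp only [weight, Submodule.smul_mem_iff _ hc]

/-- `‖s‖_F`; the case split is needed since `{t | 0 ∈ F^t E} = ℝ` and `sSup ℝ = 0`. -/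
noncomputable def norm (s : E) : ℝ := if s = 0 then 0 else Real.exp (-Fil.weight s)

theorem norm_le_exp_neg_iff (s : E) (t : ℝ) : Fil.norm s ≤ Real.exp (-t) ↔ s ∈ Fil.F t := by
  by_cases hs : s = 0
  · simp [norm, hs, (Real.exp_pos _).le]
  · rw [norm, if_neg hs, Real.exp_le_exp, neg_le_neg_iff, Fil.mem_F_iff_le_weight hs]

theorem norm_nonneg (s : E) : 0 ≤ Fil.norm s := by
  unfold norm
  split_ifs
  exacts [le_rfl, (Real.exp_pos _).le]

theorem norm_eq_zero_iff (s : E) : Fil.norm s = 0 ↔ s = 0 := by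
  unfold norm
  split_ifs with hs <;> simp [hs, Real.exp_ne_zero]

theorem norm_smul {c : K} (hc : c ≠ 0) (s : E) : Fil.norm (c • s) = Fil.norm s := by
  simp only [norm, smul_eq_zero, hc, false_or, Fil.weight_smul hc]

theorem norm_add_le_max (s s' : E) : Fil.norm (s + s') ≤ max (Fil.norm s) (Fil.norm s') := by
  by_cases hs : s = 0
  · simp [hs, norm]
  by_cases hs' : s' = 0
  · simp [hs', norm]
  set t := min (Fil.weight s) (Fil.weight s')
  have hmem : s + s' ∈ Fil.F t :=
    add_mem ((Fil.mem_F_iff_le_weight hs).mpr (min_le_left _ _))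
      ((Fil.mem_F_iff_le_weight hs').mpr (min_le_right _ _))
  have hexp : Real.exp (-t) = max (Fil.norm s) (Fil.norm s') := by
    simp only [norm, if_neg hs, if_neg hs', t]
    exact (Real.exp_monotone.comp_antitone fun _ _ h => neg_le_neg h).map_min
  exact hexp ▸ (Fil.norm_le_exp_neg_iff _ _).mpr hmem

noncomputable def toNorm : TrivNorm K E where
  nrm := Fil.norm
  nonneg := Fil.norm_nonneg
  eq_zero := Fil.norm_eq_zero_iff
  ultra := Fil.norm_add_le_max
  smul_eq _ s hc := Fil.norm_smul hc s

theorem ext {Fil' : TrivFiltration K E} (h : Fil.F = Fil'.F) : Fil = Fil' := by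
  cases Fil
  cases Fil'
  cases h
  rfl

end TrivFiltration

namespace TrivNorm

variable (N : TrivNorm K E)

theorem nrm_zero : N.nrm 0 = 0 := (N.eq_zero 0).mpr rfl

theorem nrm_pos {s : E} (hs : s ≠ 0) : 0 < N.nrm s :=
  (N.nonneg s).lt_of_ne fun h => hs ((N.eq_zero s).mp h.symm)

def filt (t : ℝ) : Submodule K E where
  carrier := {s | N.nrm s ≤ Real.exp (-t)}
  zero_mem' := by simp [nrm_zero, (Real.exp_pos _).le]
  add_mem' {s s'} hs hs' := (N.ultra s s').trans (max_le hs hs')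
  smul_mem' c s hs := by
    by_cases hc : c = 0
    · simp [hc, nrm_zero, (Real.exp_pos _).le]
    · change N.nrm (c • s) ≤ _
      rwa [N.smul_eq c s hc]

theorem mem_filt_iff {s : E} (hs : s ≠ 0) {t : ℝ} : s ∈ N.filt t ↔ t ≤ -Real.log (N.nrm s) := by
  change N.nrm s ≤ Real.exp (-t) ↔ _
  rw [← Real.log_le_iff_le_exp (N.nrm_pos hs), le_neg]

theorem filt_antitone : Antitone N.filt :=
  fun _ _ h _ hs => hs.trans (Real.exp_le_exp.mpr (neg_le_neg h))

theorem filt_exhaustive [IsNoetherian K E] : ∃ t₀, ∀ t ≤ t₀, N.filt t = ⊤ :=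
  Submodule.exists_forall_le_eq_top_of_antitone N.filt_antitone fun s =>
    ⟨-N.nrm s, show N.nrm s ≤ Real.exp (-(-N.nrm s)) by
      rw [neg_neg]; linarith [Real.add_one_le_exp (N.nrm s)]⟩

theorem filt_separated [IsArtinian K E] : ∃ t₁, ∀ t, t₁ ≤ t → N.filt t = ⊥ :=
  Submodule.exists_forall_ge_eq_bot_of_antitone N.filt_antitone fun s hs =>
    ⟨-Real.log (N.nrm s) + 1, by rw [N.mem_filt_iff hs]; linarith⟩

theorem filt_eq_iInf_lt (t : ℝ) : N.filt t = ⨅ t' < t, N.filt t' := by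
  refine le_antisymm (le_iInf₂ fun t' ht' => N.filt_antitone ht'.le) fun s hs => ?_
  simp only [Submodule.mem_iInf] at hs
  by_cases hs0 : s = 0
  · exact hs0 ▸ zero_mem _
  simp only [N.mem_filt_iff hs0] at hs ⊢
  exact le_of_forall_lt_imp_le_of_dense hs

def toFiltration [IsNoetherian K E] [IsArtinian K E] : TrivFiltration K E where
  F := N.filt
  mono h := N.filt_antitone h
  exhaustive := N.filt_exhaustive
  separated := N.filt_separated
  leftCont := N.filt_eq_iInf_lt

theorem weight_toFiltration [IsNoetherian K E] [IsArtinian K E] {s : E} (hs : s ≠ 0) :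
    N.toFiltration.weight s = -Real.log (N.nrm s) := by
  have hset : {t | s ∈ N.filt t} = Set.Iic (-Real.log (N.nrm s)) :=
    Set.ext fun t => N.mem_filt_iff hs
  rw [TrivFiltration.weight, toFiltration, hset, csSup_Iic]

theorem ext {N' : TrivNorm K E} (h : N.nrm = N'.nrm) : N = N' := by
  cases N
  cases N'
  cases h
  rfl

end TrivNorm

noncomputable def filtrationEquivNorm [FiniteDimensional K E] :
    TrivFiltration K E ≃ TrivNorm K E where
  toFun Fil := Fil.toNorm
  invFun N := N.toFiltration
  left_inv Fil := TrivFiltration.ext _ <|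
    funext fun t => SetLike.ext fun s => Fil.norm_le_exp_neg_iff s t
  right_inv N := TrivNorm.ext _ <| funext fun s => by
    by_cases hs : s = 0
    · simp [TrivFiltration.toNorm, TrivFiltration.norm, hs, N.nrm_zero]
    · simp [TrivFiltration.toNorm, TrivFiltration.norm, hs, N.weight_toFiltration hs,
        Real.exp_log (N.nrm_pos hs)]

end

/-- The assignment `F ↦ ‖·‖_F`, `‖s‖_F = exp(-sup{t | s ∈ F^t E})`, is a
bijection between separated exhaustive left-continuous ℝ-filtrations of a
finite-dimensional `K`-vector space `E` and ultrametric norms on `E` over the trivially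
valued field `K`; the inverse sends a norm `‖·‖` to `F^t E = {s | ‖s‖ ≤ exp(-t)}`. -/
theorem filtration_norm_bijection
    (K E : Type*) [Field K] [AddCommGroup E] [Module K E] [FiniteDimensional K E] :
    ∃ e : TrivFiltration K E ≃ TrivNorm K E,
      (∀ (Fil : TrivFiltration K E) (s : E),
        (e Fil).nrm s = if s = 0 then 0 else Real.exp (-(sSup {t : ℝ | s ∈ Fil.F t}))) ∧
      (∀ (N : TrivNorm K E) (t : ℝ),
        ((e.symm N).F t : Set E) = {s : E | N.nrm s ≤ Real.exp (-t)}) :=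
  ⟨filtrationEquivNorm, fun _ _ => rfl, fun _ _ => rfl⟩
end

section
/- Let (a_m)_{m≥1} be a sequence of real numbers and δ: N → R a function with δ(nm)/m → 0 as m → ∞ for each fixed n, such that for all l ≥ 2 and m₁,…,m_l ∈ N₊ one has a_{m₁+⋯+m_l} ≥ a_{m₁} + ⋯ + a_{m_l} − Σᵢ δ(mᵢ). If (a_m/m) is bounded above, then the sequence (a_m/m) converges in R. -/
/-!
Put `L = sup_{n ≥ 1} (a n - δ n) / n`, finite because `a m / m` is bounded above and
`δ m / m → 0`. Since `a m / m ≤ L + δ m / m`, the limsup of `a m / m` is at most `L`.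
Conversely, for fixed `n` write `m = q n + r` with `n ≤ r < 2n`: splitting `m` into `q`
copies of `n` and one `r` gives `a m ≥ (m - r) (a n - δ n) / n + (a r - δ r)`, and the
error is bounded uniformly in `m`, so the liminf of `a m / m` is at least
`(a n - δ n) / n` for every `n`, hence at least `L`.
-/

open Filter

def AlmostSuperadditive (a δ : ℕ → ℝ) : Prop :=
  ∀ (l : ℕ), 2 ≤ l → ∀ ms : Fin l → ℕ, (∀ i, 1 ≤ ms i) →
    a (∑ i, ms i) ≥ (∑ i, a (ms i)) - ∑ i, δ (ms i)

namespace AlmostSuperadditive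

variable {a δ : ℕ → ℝ}

theorem mul_add_le (h : AlmostSuperadditive a δ) {n q r : ℕ} (hn : 1 ≤ n) (hq : 1 ≤ q)
    (hr : 1 ≤ r) : q * (a n - δ n) + (a r - δ r) ≤ a (q * n + r) := by
  have hpos : ∀ i, 1 ≤ (Fin.snoc (fun _ => n) r : Fin (q + 1) → ℕ) i :=
    Fin.lastCases (by simpa using hr) (fun _ => by simpa using hn)
  have key := h (q + 1) (by omega) _ hpos
  simp only [Fin.sum_univ_castSucc, Fin.snoc_castSucc, Fin.snoc_last, Finset.sum_const,
    Finset.card_univ, Fintype.card_fin, nsmul_eq_mul] at key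
  push_cast at key
  linarith

theorem exists_mul_sub_le (h : AlmostSuperadditive a δ) {n : ℕ} (hn : 1 ≤ n) :
    ∃ K : ℝ, ∀ m : ℕ, 2 * n ≤ m → m * ((a n - δ n) / n) - K ≤ a m := by
  set c := (a n - δ n) / n
  set defect : ℕ → ℝ := fun r => r * c - (a r - δ r)
  obtain ⟨K, hK⟩ := ((Set.finite_Icc n (2 * n)).image defect).bddAbove
  refine ⟨K, fun m hm => ?_⟩
  set r := m % n + n
  have hmod : m % n < n := Nat.mod_lt m (by omega)
  obtain ⟨q, hq⟩ : ∃ q, m / n = q + 2 :=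
    ⟨m / n - 2, by have := (Nat.le_div_iff_mul_le (by omega)).2 hm; omega⟩
  have hm_eq : (q + 1) * n + r = m := by
    have := Nat.div_add_mod m n
    rw [hq] at this
    simp only [r]
    linarith
  have hdefect : defect r ≤ K := hK ⟨r, Set.mem_Icc.2 ⟨by omega, by omega⟩, rfl⟩
  have hsplit := h.mul_add_le hn (q := q + 1) (by omega) (show 1 ≤ r by omega)
  rw [hm_eq] at hsplit
  have hm_cast : ((q + 1 : ℕ) : ℝ) * n = m - r := by
    rw [eq_sub_iff_add_eq]; exact_mod_cast hm_eq
  have hcn : a n - δ n = n * c := by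
    simp only [c]; field_simp
  calc (m : ℝ) * c - K ≤ m * c - defect r := by linarith
    _ = ((q + 1 : ℕ) : ℝ) * (a n - δ n) + (a r - δ r) := by
      rw [hcn, ← mul_assoc, hm_cast]; ring
    _ ≤ a m := hsplit

theorem eventually_lt_div (h : AlmostSuperadditive a δ) {n : ℕ} (hn : 1 ≤ n) {c : ℝ}
    (hc : c < (a n - δ n) / n) : ∀ᶠ m : ℕ in atTop, c < a m / m := by
  obtain ⟨K, hK⟩ := h.exists_mul_sub_le hn
  have hlim : Tendsto (fun m : ℕ => (a n - δ n) / n - K / m) atTop (nhds ((a n - δ n) / n)) := by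
    simpa using (tendsto_const_div_atTop_nhds_zero_nat K).const_sub ((a n - δ n) / n)
  filter_upwards [hlim.eventually (lt_mem_nhds hc), eventually_ge_atTop (max (2 * n) 1)]
    with m hlt hm
  have hm0 : (0 : ℝ) < m := by exact_mod_cast (show 0 < m by omega)
  refine hlt.trans_le ?_
  rw [sub_le_iff_le_add, ← add_div, le_div_iff₀ hm0]
  linarith [hK m (le_of_max_le_left hm)]

end AlmostSuperadditive

/-- generalized Fekete lemma: if `a` is superadditive up to penalties
`δ(mᵢ)` per summand, with `δ(nm)/m → 0` for each fixed `n`, and `a m / m` is bounded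
above, then `a m / m` converges. -/
theorem generalized_fekete
    (a : ℕ → ℝ) (δ : ℕ → ℝ)
    (hδ : ∀ n : ℕ, Tendsto (fun m : ℕ => δ (n * m) / (m : ℝ)) atTop (nhds 0))
    (hsuper : ∀ (l : ℕ), 2 ≤ l → ∀ ms : Fin l → ℕ, (∀ i, 1 ≤ ms i) →
      a (∑ i, ms i) ≥ (∑ i, a (ms i)) - ∑ i, δ (ms i))
    (hbdd : ∃ B : ℝ, ∀ m : ℕ, 1 ≤ m → a m / (m : ℝ) ≤ B) :
    ∃ L : ℝ, Tendsto (fun m : ℕ => a m / (m : ℝ)) atTop (nhds L) := by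
  obtain ⟨B, hB⟩ := hbdd
  have hδ1 : Tendsto (fun m : ℕ => δ m / m) atTop (nhds 0) := by simpa using hδ 1
  set b : ℕ → ℝ := fun k => (a (k + 1) - δ (k + 1)) / ((k + 1 : ℕ) : ℝ)
  obtain ⟨C, hC⟩ := hδ1.bddBelow_range
  have hb_bdd : BddAbove (Set.range b) := ⟨B - C, by
    rintro _ ⟨k, rfl⟩
    have := hC ⟨k + 1, rfl⟩
    simp only [b, sub_div]
    linarith [hB (k + 1) (by omega)]⟩
  refine ⟨⨆ k, b k, tendsto_order.2 ⟨fun c hc => ?_, fun c hc => ?_⟩⟩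
  · obtain ⟨k, hk⟩ := exists_lt_of_lt_ciSup hc
    exact AlmostSuperadditive.eventually_lt_div hsuper (Nat.succ_pos k) hk
  · filter_upwards [(tendsto_order.1 (hδ1.const_add (⨆ k, b k))).2 c (by simpa using hc),
      eventually_ge_atTop 1] with m hlt hm
    have hbm : b (m - 1) = a m / m - δ m / m := by simp only [b, Nat.sub_add_cancel hm, sub_div]
    linarith [le_ciSup hb_bdd (m - 1)]
end
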